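/- For q = 2, m ≥ 4, ω a primitive element of 𝔽_{2^m}, and i ∈ {1,...,2^m−2} with ω^i ∉ 𝔽₂, let N^(i) be the q-matroid on 𝔽₂⁴ represented by G^(i) = [[1, ω, 0, 0],[0, 0, 1, ω^i]]. Then every 2-dimensional subspace V of 𝔽₂⁴ other than T₁ = ⟨e₁,e₂⟩ and T₂ = ⟨e₃,e₄⟩ has rank 2 in N^(i) if and only if 1, ω, ω^i, ω^{i+1} are linearly independent over 𝔽₂. Consequently, the q-matroids N^(1) and N^(2) are not isomorphic when 1, ω, ω², ω³ are linearly independent. -/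
import Mathlib


open Submodule Module

/-- An `L`-map: a map between `F`-vector spaces that maps every subspace onto a subspace. -/
def IsLMap (F : Type*) [Field F] {E₁ E₂ : Type*} [AddCommGroup E₁] [Module F E₁]
    [AddCommGroup E₂] [Module F E₂] (φ : E₁ → E₂) : Prop :=
  ∀ V : Submodule F E₁, ∃ W : Submodule F E₂, φ '' (V : Set E₁) = (W : Set E₂)

/-- The rank function on `𝔽₂⁴` represented by a `2×4` matrix `G` over an
extension field `K` of `𝔽₂`. -/
noncomputable def repRho {K : Type*} [Field K] [Algebra (ZMod 2) K]
    (G : Matrix (Fin 2) (Fin 4) K) (V : Submodule (ZMod 2) (Fin 4 → ZMod 2)) : ℕ :=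
  finrank K (span K
    ((fun v : Fin 4 → ZMod 2 => G.mulVec fun j => algebraMap (ZMod 2) K (v j)) ''
      (V : Set (Fin 4 → ZMod 2))))

/-- The matrix `G⁽ⁱ⁾ = [[1, ω, 0, 0], [0, 0, 1, ωⁱ]]`. -/
noncomputable def Gmat {K : Type*} [Field K] (ω : K) (i : ℕ) : Matrix (Fin 2) (Fin 4) K :=
  !![1, ω, 0, 0; 0, 0, 1, ω ^ i]

/-- `T₁ = ⟨e₁, e₂⟩ ≤ 𝔽₂⁴`. -/
noncomputable def T₁ : Submodule (ZMod 2) (Fin 4 → ZMod 2) :=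
  span (ZMod 2) {Pi.single 0 1, Pi.single 1 1}

/-- `T₂ = ⟨e₃, e₄⟩ ≤ 𝔽₂⁴`. -/
noncomputable def T₂ : Submodule (ZMod 2) (Fin 4 → ZMod 2) :=
  span (ZMod 2) {Pi.single 2 1, Pi.single 3 1}

section Aux

variable {K : Type*} [Field K] [Algebra (ZMod 2) K]

/-- The `𝔽₂`-linear map `v ↦ G ·(algebraMap ∘ v)`. -/
noncomputable def phiL (G : Matrix (Fin 2) (Fin 4) K) :
    (Fin 4 → ZMod 2) →ₗ[ZMod 2] (Fin 2 → K) where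
  toFun v := G.mulVec fun j => algebraMap (ZMod 2) K (v j)
  map_add' x y := by
    have h : (fun j => algebraMap (ZMod 2) K ((x + y) j))
        = (fun j => algebraMap (ZMod 2) K (x j)) + fun j => algebraMap (ZMod 2) K (y j) :=
      funext fun j => map_add _ _ _
    show G.mulVec _ = G.mulVec _ + G.mulVec _
    rw [h, Matrix.mulVec_add]
  map_smul' c x := by
    have h : (fun j => algebraMap (ZMod 2) K ((c • x) j))
        = algebraMap (ZMod 2) K c • fun j => algebraMap (ZMod 2) K (x j) := by
      funext j
      simp [Algebra.smul_def]
    show (G.mulVec fun j => algebraMap (ZMod 2) K ((c • x) j))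
        = (RingHom.id (ZMod 2)) c • G.mulVec fun j => algebraMap (ZMod 2) K (x j)
    rw [h, Matrix.mulVec_smul, RingHom.id_apply, algebraMap_smul]

lemma span_image_span (G : Matrix (Fin 2) (Fin 4) K) (S : Set (Fin 4 → ZMod 2)) :
    span K ((phiL G) '' ((span (ZMod 2) S : Submodule (ZMod 2) (Fin 4 → ZMod 2)) : Set _))
      = span K ((phiL G) '' S) := by
  refine le_antisymm ?_ (span_mono (Set.image_mono subset_span))
  rw [span_le]
  rintro _ ⟨x, hx, rfl⟩
  have hle : span (ZMod 2) S ≤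
      Submodule.comap (phiL G) ((span K ((phiL G) '' S)).restrictScalars (ZMod 2)) := by
    rw [span_le]
    intro y hy
    exact subset_span (Set.mem_image_of_mem _ hy)
  exact hle hx

lemma repRho_span_pair (G : Matrix (Fin 2) (Fin 4) K) (v w : Fin 4 → ZMod 2) :
    repRho G (span (ZMod 2) {v, w}) = finrank K (span K {phiL G v, phiL G w}) := by
  unfold repRho
  have h : (fun v : Fin 4 → ZMod 2 => G.mulVec fun j => algebraMap (ZMod 2) K (v j))
      = ⇑(phiL G) := rfl
  rw [h, span_image_span, Set.image_pair]

lemma phi_apply0 (ω : K) (i : ℕ) (v : Fin 4 → ZMod 2) :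
    phiL (Gmat ω i) v 0
      = algebraMap (ZMod 2) K (v 0) + ω * algebraMap (ZMod 2) K (v 1) := by
  simp [phiL, Gmat, Matrix.mulVec, dotProduct, Fin.sum_univ_four]

lemma phi_apply1 (ω : K) (i : ℕ) (v : Fin 4 → ZMod 2) :
    phiL (Gmat ω i) v 1
      = algebraMap (ZMod 2) K (v 2) + ω ^ i * algebraMap (ZMod 2) K (v 3) := by
  simp [phiL, Gmat, Matrix.mulVec, dotProduct, Fin.sum_univ_four]

lemma finrank_span_pair_of_li {F M : Type*} [Field F] [AddCommGroup M] [Module F M] {x y : M}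
    (h : LinearIndependent F ![x, y]) : finrank F (span F ({x, y} : Set M)) = 2 := by
  have hr : Set.range ![x, y] = {x, y} := by
    ext z; simp [Fin.exists_fin_two, or_comm]
  have h2 := finrank_span_eq_card h
  rwa [hr, Fintype.card_fin] at h2

lemma finrank_span_pair_smul {F M : Type*} [Field F] [AddCommGroup M] [Module F M] {x : M}
    (c : F) (hx : x ≠ 0) : finrank F (span F ({x, c • x} : Set M)) = 1 := by
  have h1 : span F ({x, c • x} : Set M) = span F {x} := by
    refine le_antisymm (span_le.mpr ?_) (span_mono (by simp))
    rintro z (rfl | rfl)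
    · exact subset_span rfl
    · exact Submodule.smul_mem _ _ (subset_span rfl)
  rw [h1]
  exact finrank_span_singleton hx

lemma det_indep {L : Type*} [Field L] (x y : Fin 2 → L)
    (h : x 0 * y 1 - x 1 * y 0 ≠ 0) : LinearIndependent L ![x, y] := by
  rw [LinearIndependent.pair_iff]
  intro s t hst
  have h0 : s * x 0 + t * y 0 = 0 := by
    have := congrFun hst 0
    simpa [smul_eq_mul] using this
  have h1 : s * x 1 + t * y 1 = 0 := by
    have := congrFun hst 1
    simpa [smul_eq_mul] using this
  constructor
  · have hs : s * (x 0 * y 1 - x 1 * y 0) = 0 := by linear_combination y 1 * h0 - y 0 * h1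
    exact (mul_eq_zero.mp hs).resolve_right h
  · have ht : t * (x 0 * y 1 - x 1 * y 0) = 0 := by linear_combination x 0 * h1 - x 1 * h0
    exact (mul_eq_zero.mp ht).resolve_right h

end Aux

lemma mem_T₁ (x : Fin 4 → ZMod 2) : x ∈ T₁ ↔ x 2 = 0 ∧ x 3 = 0 := by
  rw [T₁, Submodule.mem_span_pair]
  constructor
  · rintro ⟨a, b, rfl⟩
    constructor <;> simp [Pi.single_apply]
  · rintro ⟨h2, h3⟩
    refine ⟨x 0, x 1, funext fun j => ?_⟩
    fin_cases j <;> simp [Pi.single_apply, h2, h3]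

lemma mem_T₂ (x : Fin 4 → ZMod 2) : x ∈ T₂ ↔ x 0 = 0 ∧ x 1 = 0 := by
  rw [T₂, Submodule.mem_span_pair]
  constructor
  · rintro ⟨a, b, rfl⟩
    constructor <;> simp [Pi.single_apply]
  · rintro ⟨h0, h1⟩
    refine ⟨x 2, x 3, funext fun j => ?_⟩
    fin_cases j <;> simp [Pi.single_apply, h0, h1]

lemma keyDec : ∀ v w : Fin 4 → ZMod 2, v ≠ 0 → w ≠ 0 → v ≠ w →
    ¬(v 2 = 0 ∧ v 3 = 0 ∧ w 2 = 0 ∧ w 3 = 0) → ¬(v 0 = 0 ∧ v 1 = 0 ∧ w 0 = 0 ∧ w 1 = 0) →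
    ¬(v 0 * w 2 - v 2 * w 0 = 0 ∧ v 1 * w 2 - v 2 * w 1 = 0 ∧
      v 0 * w 3 - v 3 * w 0 = 0 ∧ v 1 * w 3 - v 3 * w 1 = 0) := by decide

lemma zmodtwo : ∀ a : ZMod 2, a = 0 ∨ a = 1 := by decide

lemma exists_pair_of_finrank2 (V : Submodule (ZMod 2) (Fin 4 → ZMod 2))
    (h : finrank (ZMod 2) V = 2) :
    ∃ v w : Fin 4 → ZMod 2, v ≠ 0 ∧ w ≠ 0 ∧ v ≠ w ∧ V = span (ZMod 2) {v, w} := by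
  let b := finBasisOfFinrankEq (ZMod 2) V h
  refine ⟨(b 0 : Fin 4 → ZMod 2), (b 1 : Fin 4 → ZMod 2), ?_, ?_, ?_, ?_⟩
  · simpa using b.ne_zero 0
  · simpa using b.ne_zero 1
  · intro hvw
    exact absurd (b.injective (Subtype.coe_injective hvw)) (by decide)
  · have h1 : span (ZMod 2) (Set.range (V.subtype ∘ b)) = V := by
      rw [Set.range_comp, Submodule.span_image, b.span_eq, Submodule.map_subtype_top]
    have h2 : Set.range (V.subtype ∘ b)
        = {(b 0 : Fin 4 → ZMod 2), (b 1 : Fin 4 → ZMod 2)} := by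
      ext z
      constructor
      · rintro ⟨j, rfl⟩
        fin_cases j
        · exact Or.inl rfl
        · exact Or.inr rfl
      · rintro (rfl | rfl)
        · exact ⟨0, rfl⟩
        · exact ⟨1, rfl⟩
    conv_lhs => rw [← h1]
    rw [h2]

lemma coeffs_good {K : Type*} [Field K] [Algebra (ZMod 2) K] {ω : K} {i : ℕ}
    (h2 : (2 : K) = 0) (hω0 : ω ≠ 0) (hω1 : ω ≠ 1) (hi0 : ω ^ i ≠ 0) (hi1 : ω ^ i ≠ 1)
    {c0 c1 c2 c3 : ZMod 2}
    (hrel : algebraMap (ZMod 2) K c0 + algebraMap (ZMod 2) K c1 * ω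
      + algebraMap (ZMod 2) K c2 * ω ^ i + algebraMap (ZMod 2) K c3 * (ω ^ i * ω) = 0)
    (hne : ¬(c0 = 0 ∧ c1 = 0 ∧ c2 = 0 ∧ c3 = 0)) :
    c1 * c2 - c0 * c3 = 1 := by
  have hneg : ∀ x : K, -x = x := fun x => by
    rw [neg_eq_iff_add_eq_zero]; linear_combination x * h2
  have hone : ∀ x : K, 1 + x = 0 → x = 1 := fun x hx => by
    have h := eq_neg_of_add_eq_zero_right hx
    rwa [hneg] at h
  rcases zmodtwo c0 with rfl | rfl <;> rcases zmodtwo c1 with rfl | rfl <;>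
    rcases zmodtwo c2 with rfl | rfl <;> rcases zmodtwo c3 with rfl | rfl <;>
    simp only [map_zero, map_one, zero_mul, one_mul, zero_add, add_zero] at hrel <;>
    first
      | decide
      | exact absurd (And.intro rfl (And.intro rfl (And.intro rfl rfl))) hne
      | exact absurd hrel one_ne_zero
      | exact absurd hrel hω0
      | exact absurd hrel hi0
      | exact absurd hrel (mul_ne_zero hi0 hω0)
      | exact absurd (hone _ hrel) hω1
      | exact absurd (hone _ hrel) hi1
      | exact absurd (hone _ ((mul_eq_zero.mp
          (show ω * (1 + ω ^ i) = 0 by linear_combination hrel)).resolve_left hω0)) hi1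
      | exact absurd (hone _ ((mul_eq_zero.mp
          (show ω ^ i * (1 + ω) = 0 by linear_combination hrel)).resolve_left hi0)) hω1
      | exact absurd (hone _ ((mul_eq_zero.mp
          (show (1 + ω) * (1 + ω ^ i) = 0 by linear_combination hrel)).resolve_left
            (fun hh => hω1 (hone _ hh)))) hi1

lemma T₁_finrank : finrank (ZMod 2) T₁ = 2 := by
  rw [T₁]
  apply finrank_span_pair_of_li
  rw [LinearIndependent.pair_iff]
  intro s t hst
  have e0 := congrFun hst 0
  have e1 := congrFun hst 1
  simp [Pi.single_apply] at e0 e1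
  exact ⟨e0, e1⟩

lemma T₂_finrank : finrank (ZMod 2) T₂ = 2 := by
  rw [T₂]
  apply finrank_span_pair_of_li
  rw [LinearIndependent.pair_iff]
  intro s t hst
  have e0 := congrFun hst 2
  have e1 := congrFun hst 3
  simp [Pi.single_apply] at e0 e1
  exact ⟨e0, e1⟩

lemma char_two_K {K : Type*} [Field K] [Algebra (ZMod 2) K] : (2 : K) = 0 := by
  have h : (2 : ZMod 2) = 0 := by decide
  calc (2 : K) = algebraMap (ZMod 2) K 2 := by rw [map_ofNat]
    _ = algebraMap (ZMod 2) K 0 := by rw [h]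
    _ = 0 := map_zero _

/-- Main content of the first part. -/
lemma part1 {K : Type*} [Field K] [Algebra (ZMod 2) K] (ω : K) (i : ℕ) (hi : 1 ≤ i)
    (hrange : ω ^ i ∉ Set.range (algebraMap (ZMod 2) K)) :
    (∀ V : Submodule (ZMod 2) (Fin 4 → ZMod 2),
        finrank (ZMod 2) V = 2 → V ≠ T₁ → V ≠ T₂ → repRho (Gmat ω i) V = 2) ↔
      LinearIndependent (ZMod 2) ![(1 : K), ω, ω ^ i, ω ^ (i + 1)] := by
  have h2K : (2 : K) = 0 := char_two_K
  have hωi0 : ω ^ i ≠ 0 := fun h => hrange ⟨0, by rw [map_zero, h]⟩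
  have hωi1 : ω ^ i ≠ 1 := fun h => hrange ⟨1, by rw [map_one, h]⟩
  have hω0 : ω ≠ 0 := fun h => hωi0 (by rw [h]; exact zero_pow (by omega))
  have hω1 : ω ≠ 1 := fun h => hωi1 (by rw [h, one_pow])
  constructor
  · -- all non-special planes have rank 2 → linear independence
    intro hAll
    by_contra hni
    obtain ⟨g, hg, j, hj⟩ := Fintype.not_linearIndependent_iff.mp hni
    have hrel : algebraMap (ZMod 2) K (g 0) + algebraMap (ZMod 2) K (g 1) * ω
        + algebraMap (ZMod 2) K (g 2) * ω ^ i + algebraMap (ZMod 2) K (g 3) * (ω ^ i * ω)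
        = 0 := by
      rw [Fin.sum_univ_four] at hg
      simpa [Algebra.smul_def, pow_succ, mul_one] using hg
    have hne : ¬(g 0 = 0 ∧ g 1 = 0 ∧ g 2 = 0 ∧ g 3 = 0) := by
      rintro ⟨e0, e1, e2, e3⟩
      fin_cases j <;> simp_all
    have hd := coeffs_good h2K hω0 hω1 hωi0 hωi1 hrel hne
    -- construct the bad plane
    set v : Fin 4 → ZMod 2 := ![1, 0, g 1, g 3] with hv
    set w : Fin 4 → ZMod 2 := ![0, 1, g 0, g 2] with hw
    have hli : LinearIndependent (ZMod 2) ![v, w] := by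
      rw [LinearIndependent.pair_iff]
      intro s t hst
      have e0 := congrFun hst 0
      have e1 := congrFun hst 1
      simp [hv, hw] at e0 e1
      exact ⟨e0, e1⟩
    set V : Submodule (ZMod 2) (Fin 4 → ZMod 2) := span (ZMod 2) {v, w} with hV
    have hdim : finrank (ZMod 2) V = 2 := finrank_span_pair_of_li hli
    have hvV : v ∈ V := subset_span (Set.mem_insert _ _)
    have hVT₁ : V ≠ T₁ := by
      intro hEq
      have hv1 : v ∈ T₁ := hEq ▸ hvV
      rw [mem_T₁] at hv1
      have hg1 : g 1 = 0 := by simpa [hv] using hv1.1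
      have hg3 : g 3 = 0 := by simpa [hv] using hv1.2
      rw [hg1, hg3] at hd
      simp at hd
    have hVT₂ : V ≠ T₂ := by
      intro hEq
      have hv2 : v ∈ T₂ := hEq ▸ hvV
      rw [mem_T₂] at hv2
      have : (1 : ZMod 2) = 0 := by simpa [hv] using hv2.1
      exact one_ne_zero this
    have hrank := hAll V hdim hVT₁ hVT₂
    rw [hV, repRho_span_pair] at hrank
    -- but the image has rank 1
    have hx0 : phiL (Gmat ω i) v 0 = 1 := by
      rw [phi_apply0]; simp [hv]
    have hx1 : phiL (Gmat ω i) v 1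
        = algebraMap (ZMod 2) K (g 1) + ω ^ i * algebraMap (ZMod 2) K (g 3) := by
      rw [phi_apply1]; simp [hv]
    have hxne : phiL (Gmat ω i) v ≠ 0 := by
      intro h0
      have := congrFun h0 0
      rw [hx0] at this
      exact one_ne_zero this
    have hy : phiL (Gmat ω i) w = ω • phiL (Gmat ω i) v := by
      funext r
      fin_cases r
      · show phiL (Gmat ω i) w 0 = ω * phiL (Gmat ω i) v 0
        rw [phi_apply0, phi_apply0]
        simp [hv, hw]
      · show phiL (Gmat ω i) w 1 = ω * phiL (Gmat ω i) v 1
        rw [phi_apply1, phi_apply1]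
        simp only [hv, hw]
        show algebraMap (ZMod 2) K (g 0) + ω ^ i * algebraMap (ZMod 2) K (g 2)
            = ω * (algebraMap (ZMod 2) K (g 1) + ω ^ i * algebraMap (ZMod 2) K (g 3))
        linear_combination hrel - (algebraMap (ZMod 2) K (g 1) * ω
          + algebraMap (ZMod 2) K (g 3) * (ω ^ i * ω)) * h2K
    rw [hy, finrank_span_pair_smul ω hxne] at hrank
    exact absurd hrank (by norm_num)
  · -- linear independence → all non-special planes have rank 2
    intro hli V hdim hVT₁ hVT₂
    obtain ⟨v, w, hv0, hw0, hvw, rfl⟩ := exists_pair_of_finrank2 V hdim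
    have hvwT₁ : ¬(v 2 = 0 ∧ v 3 = 0 ∧ w 2 = 0 ∧ w 3 = 0) := by
      rintro ⟨a1, a2, a3, a4⟩
      apply hVT₁
      refine Submodule.eq_of_le_of_finrank_le (span_le.mpr ?_) ?_
      · rintro z (rfl | rfl)
        · exact (mem_T₁ _).mpr ⟨a1, a2⟩
        · exact (mem_T₁ _).mpr ⟨a3, a4⟩
      · rw [hdim, T₁_finrank]
    have hvwT₂ : ¬(v 0 = 0 ∧ v 1 = 0 ∧ w 0 = 0 ∧ w 1 = 0) := by
      rintro ⟨a1, a2, a3, a4⟩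
      apply hVT₂
      refine Submodule.eq_of_le_of_finrank_le (span_le.mpr ?_) ?_
      · rintro z (rfl | rfl)
        · exact (mem_T₂ _).mpr ⟨a1, a2⟩
        · exact (mem_T₂ _).mpr ⟨a3, a4⟩
      · rw [hdim, T₂_finrank]
    rw [repRho_span_pair]
    have e0 := phi_apply0 ω i v
    have e1 := phi_apply1 ω i v
    have f0 := phi_apply0 ω i w
    have f1 := phi_apply1 ω i w
    have hdet : phiL (Gmat ω i) v 0 * phiL (Gmat ω i) w 1
        - phiL (Gmat ω i) v 1 * phiL (Gmat ω i) w 0 ≠ 0 := by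
      intro h0
      rw [e0, e1, f0, f1] at h0
      apply keyDec v w hv0 hw0 hvw hvwT₁ hvwT₂
      have hli' := Fintype.linearIndependent_iff.mp hli
      have hsum : ∑ j, (![v 0 * w 2 - v 2 * w 0, v 1 * w 2 - v 2 * w 1,
          v 0 * w 3 - v 3 * w 0, v 1 * w 3 - v 3 * w 1]) j
            • (![(1 : K), ω, ω ^ i, ω ^ (i + 1)]) j = 0 := by
        rw [Fin.sum_univ_four]
        simp only [Matrix.cons_val_zero, Matrix.cons_val_one, Matrix.head_cons,
          Matrix.cons_val_two, Matrix.cons_val_three, Matrix.tail_cons,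
          Algebra.smul_def, map_sub, map_mul, pow_succ]
        linear_combination h0
      have hz := hli' _ hsum
      exact ⟨hz 0, hz 1, hz 2, hz 3⟩
    exact finrank_span_pair_of_li (det_indep _ _ hdet)

lemma repRho_T₁ {K : Type*} [Field K] [Algebra (ZMod 2) K] (ω : K) (i : ℕ) :
    repRho (Gmat ω i) T₁ = 1 := by
  rw [T₁, repRho_span_pair]
  have hy : phiL (Gmat ω i) (Pi.single 1 1) = ω • phiL (Gmat ω i) (Pi.single 0 1) := by
    funext r
    fin_cases r
    · show phiL (Gmat ω i) (Pi.single 1 1) 0 = ω * phiL (Gmat ω i) (Pi.single 0 1) 0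
      rw [phi_apply0, phi_apply0]
      simp [Pi.single_apply]
    · show phiL (Gmat ω i) (Pi.single 1 1) 1 = ω * phiL (Gmat ω i) (Pi.single 0 1) 1
      rw [phi_apply1, phi_apply1]
      simp [Pi.single_apply]
  rw [hy]
  apply finrank_span_pair_smul
  intro h0
  have h1 := congrFun h0 0
  rw [phi_apply0] at h1
  simp [Pi.single_apply] at h1

lemma repRho_T₂ {K : Type*} [Field K] [Algebra (ZMod 2) K] (ω : K) (i : ℕ) :
    repRho (Gmat ω i) T₂ = 1 := by
  rw [T₂, repRho_span_pair]
  have hy : phiL (Gmat ω i) (Pi.single 3 1) = ω ^ i • phiL (Gmat ω i) (Pi.single 2 1) := by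
    funext r
    fin_cases r
    · show phiL (Gmat ω i) (Pi.single 3 1) 0 = ω ^ i * phiL (Gmat ω i) (Pi.single 2 1) 0
      rw [phi_apply0, phi_apply0]
      simp [Pi.single_apply]
    · show phiL (Gmat ω i) (Pi.single 3 1) 1 = ω ^ i * phiL (Gmat ω i) (Pi.single 2 1) 1
      rw [phi_apply1, phi_apply1]
      simp [Pi.single_apply]
  rw [hy]
  apply finrank_span_pair_smul
  intro h0
  have h1 := congrFun h0 1
  rw [phi_apply1] at h1
  simp [Pi.single_apply] at h1

lemma finrank_image_eq {φ : (Fin 4 → ZMod 2) → (Fin 4 → ZMod 2)} (hinj : Function.Injective φ)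
    (U W : Submodule (ZMod 2) (Fin 4 → ZMod 2)) (h : φ '' (U : Set (Fin 4 → ZMod 2)) = ↑W)
    (hU : finrank (ZMod 2) U = 2) : finrank (ZMod 2) W = 2 := by
  classical
  haveI : Fintype ↥U := Fintype.ofFinite _
  haveI : Fintype ↥W := Fintype.ofFinite _
  have hcU : Nat.card ↥U = 2 ^ 2 := by
    rw [Nat.card_eq_fintype_card, card_eq_pow_finrank (K := ZMod 2), hU, ZMod.card]
  have hcW : Nat.card ↥W = 2 ^ finrank (ZMod 2) W := by
    rw [Nat.card_eq_fintype_card, card_eq_pow_finrank (K := ZMod 2), ZMod.card]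
  have himg : Nat.card ↥W = Nat.card ↥U := by
    have h2 : Nat.card (φ '' (U : Set (Fin 4 → ZMod 2))) = Nat.card (U : Set (Fin 4 → ZMod 2)) :=
      Nat.card_image_of_injective hinj _
    rw [h] at h2
    exact h2
  have : (2 : ℕ) ^ finrank (ZMod 2) W = 2 ^ 2 := by rw [← hcW, himg, hcU]
  exact Nat.pow_right_injective (le_refl 2) this

/-- Every `2`-dimensional subspace of `𝔽₂⁴` other than `T₁, T₂` has rank `2` in
`N⁽ⁱ⁾` iff `1, ω, ωⁱ, ωⁱ⁺¹` are linearly independent over `𝔽₂`; consequently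
`N⁽¹⁾` and `N⁽²⁾` are non-isomorphic when `1, ω, ω², ω³` are independent. -/
theorem stmt18 {K : Type*} [Field K] [Fintype K] [Algebra (ZMod 2) K]
    (m : ℕ) (hm : 4 ≤ m) (hcard : Fintype.card K = 2 ^ m)
    (ω : K) (hprim : ∀ x : K, x ≠ 0 → ∃ j : ℕ, x = ω ^ j) :
    (∀ i : ℕ, 1 ≤ i → i ≤ 2 ^ m - 2 → ω ^ i ∉ Set.range (algebraMap (ZMod 2) K) →
      ((∀ V : Submodule (ZMod 2) (Fin 4 → ZMod 2),
          finrank (ZMod 2) V = 2 → V ≠ T₁ → V ≠ T₂ → repRho (Gmat ω i) V = 2) ↔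
        LinearIndependent (ZMod 2) ![(1 : K), ω, ω ^ i, ω ^ (i + 1)])) ∧
    (LinearIndependent (ZMod 2) ![(1 : K), ω, ω ^ 2, ω ^ 3] →
      ¬ ∃ φ : (Fin 4 → ZMod 2) → (Fin 4 → ZMod 2),
        Function.Bijective φ ∧ IsLMap (ZMod 2) φ ∧
        ∀ (V W : Submodule (ZMod 2) (Fin 4 → ZMod 2)),
          φ '' (V : Set (Fin 4 → ZMod 2)) = (W : Set (Fin 4 → ZMod 2)) →
          repRho (Gmat ω 2) W = repRho (Gmat ω 1) V) := by
  have h2K : (2 : K) = 0 := char_two_K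
  constructor
  · intro i hi1 _ hrange
    exact part1 ω i hi1 hrange
  · rintro hind ⟨φ, hbij, hL, hpres⟩
    have hinj := hbij.injective
    -- `ω² ∉ 𝔽₂`
    have hω2ne0 : ω ^ 2 ≠ 0 := by
      have := hind.ne_zero 2
      simpa using this
    have hω2ne1 : ω ^ 2 ≠ 1 := by
      intro h1
      have hsum : ∑ j, (![(1 : ZMod 2), 0, 1, 0]) j
          • (![(1 : K), ω, ω ^ 2, ω ^ 3]) j = 0 := by
        rw [Fin.sum_univ_four]
        simp [h1]
        linear_combination h2K
      have := Fintype.linearIndependent_iff.mp hind _ hsum 0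
      simp at this
    have hrange2 : ω ^ 2 ∉ Set.range (algebraMap (ZMod 2) K) := by
      rintro ⟨c, hc⟩
      rcases zmodtwo c with rfl | rfl
      · rw [map_zero] at hc
        exact hω2ne0 hc.symm
      · rw [map_one] at hc
        exact hω2ne1 hc.symm
    -- all non-special planes have rank 2 in `N⁽²⁾`
    have hAll2 := (part1 ω 2 (by norm_num) hrange2).mpr (by
      have : (2 : ℕ) + 1 = 3 := rfl
      rw [this]
      exact hind)
    -- the special plane `V₀` for `N⁽¹⁾`
    set v₀ : Fin 4 → ZMod 2 := ![1, 0, 1, 0] with hv₀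
    set w₀ : Fin 4 → ZMod 2 := ![0, 1, 0, 1] with hw₀
    set V₀ : Submodule (ZMod 2) (Fin 4 → ZMod 2) := span (ZMod 2) {v₀, w₀} with hV₀def
    have hliV₀ : LinearIndependent (ZMod 2) ![v₀, w₀] := by
      rw [LinearIndependent.pair_iff]
      intro s t hst
      have e0 := congrFun hst 0
      have e1 := congrFun hst 1
      simp [hv₀, hw₀] at e0 e1
      exact ⟨e0, e1⟩
    have hV₀dim : finrank (ZMod 2) V₀ = 2 := finrank_span_pair_of_li hliV₀
    have hv₀V₀ : v₀ ∈ V₀ := subset_span (Set.mem_insert _ _)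
    have hV₀T₁ : V₀ ≠ T₁ := by
      intro hEq
      have h1 := (mem_T₁ v₀).mp (hEq ▸ hv₀V₀)
      simp [hv₀] at h1
    have hV₀T₂ : V₀ ≠ T₂ := by
      intro hEq
      have h1 := (mem_T₂ v₀).mp (hEq ▸ hv₀V₀)
      simp [hv₀] at h1
    have hT₁T₂ : T₁ ≠ T₂ := by
      intro hEq
      have h1 : (Pi.single 0 1 : Fin 4 → ZMod 2) ∈ T₁ :=
        subset_span (Set.mem_insert _ _)
      have h2 := (mem_T₂ _).mp (hEq ▸ h1)
      simp at h2
    -- `ρ₁(V₀) = 1`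
    have hrepV₀ : repRho (Gmat ω 1) V₀ = 1 := by
      rw [hV₀def, repRho_span_pair]
      have hy : phiL (Gmat ω 1) w₀ = ω • phiL (Gmat ω 1) v₀ := by
        funext r
        fin_cases r
        · show phiL (Gmat ω 1) w₀ 0 = ω * phiL (Gmat ω 1) v₀ 0
          rw [phi_apply0, phi_apply0]
          simp [hv₀, hw₀]
        · show phiL (Gmat ω 1) w₀ 1 = ω * phiL (Gmat ω 1) v₀ 1
          rw [phi_apply1, phi_apply1]
          simp [hv₀, hw₀]
      rw [hy]
      apply finrank_span_pair_smul
      intro h0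
      have h1 := congrFun h0 0
      rw [phi_apply0] at h1
      simp [hv₀] at h1
    -- images
    obtain ⟨W₀, hW₀⟩ := hL V₀
    obtain ⟨W₁, hW₁⟩ := hL T₁
    obtain ⟨W₂, hW₂⟩ := hL T₂
    have r₀ : repRho (Gmat ω 2) W₀ = 1 := (hpres V₀ W₀ hW₀).trans hrepV₀
    have r₁ : repRho (Gmat ω 2) W₁ = 1 := (hpres T₁ W₁ hW₁).trans (repRho_T₁ ω 1)
    have r₂ : repRho (Gmat ω 2) W₂ = 1 := (hpres T₂ W₂ hW₂).trans (repRho_T₂ ω 1)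
    have d₀ : finrank (ZMod 2) W₀ = 2 := finrank_image_eq hinj _ _ hW₀ hV₀dim
    have d₁ : finrank (ZMod 2) W₁ = 2 := finrank_image_eq hinj _ _ hW₁ T₁_finrank
    have d₂ : finrank (ZMod 2) W₂ = 2 := finrank_image_eq hinj _ _ hW₂ T₂_finrank
    -- classification
    have hclass : ∀ W' : Submodule (ZMod 2) (Fin 4 → ZMod 2),
        finrank (ZMod 2) W' = 2 → repRho (Gmat ω 2) W' = 1 → W' = T₁ ∨ W' = T₂ := by
      intro W' hd hr
      by_contra hcon
      push_neg at hcon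
      have := hAll2 W' hd hcon.1 hcon.2
      rw [hr] at this
      norm_num at this
    -- distinctness of images
    have hdist : ∀ (U U' W W' : Submodule (ZMod 2) (Fin 4 → ZMod 2)),
        φ '' (U : Set (Fin 4 → ZMod 2)) = ↑W → φ '' (U' : Set (Fin 4 → ZMod 2)) = ↑W' →
        W = W' → U = U' := by
      intro U U' W W' hU hU' hWW
      apply SetLike.coe_injective
      apply Set.image_injective.mpr hinj
      rw [hU, hU', hWW]
    rcases hclass W₀ d₀ r₀ with h0 | h0 <;> rcases hclass W₁ d₁ r₁ with h1 | h1 <;>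
      rcases hclass W₂ d₂ r₂ with h2 | h2
    · exact hV₀T₁ (hdist V₀ T₁ W₀ W₁ hW₀ hW₁ (h0.trans h1.symm))
    · exact hV₀T₁ (hdist V₀ T₁ W₀ W₁ hW₀ hW₁ (h0.trans h1.symm))
    · exact hV₀T₂ (hdist V₀ T₂ W₀ W₂ hW₀ hW₂ (h0.trans h2.symm))
    · exact hT₁T₂ (hdist T₁ T₂ W₁ W₂ hW₁ hW₂ (h1.trans h2.symm))
    · exact hT₁T₂ (hdist T₁ T₂ W₁ W₂ hW₁ hW₂ (h1.trans h2.symm))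
    · exact hV₀T₂ (hdist V₀ T₂ W₀ W₂ hW₀ hW₂ (h0.trans h2.symm))
    · exact hV₀T₁ (hdist V₀ T₁ W₀ W₁ hW₀ hW₁ (h0.trans h1.symm))
    · exact hV₀T₁ (hdist V₀ T₁ W₀ W₁ hW₀ hW₁ (h0.trans h1.symm))
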